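/- arXiv:1806.05715 — 3 statements merged into one kernel-verified Lean document; each statement's English description precedes it below -/
import Mathlib

section
/- (Sufficient lattice condition for 2-level Construction C*.) Let C ⊆ F_2^{2n} be a linear binary code with projection codes C_1, C_2 and antiprojection S_2(0) = {c_2 ∈ C_2 : (0, c_2) ∈ C}. If C_1 ⊆ S_2(0) and for all a, b ∈ C_1 the Schur product a * b lies in S_2(0), and moreover for all a, b ∈ C_2 and u, v ∈ C_1 the carries (a * b) and ((a XOR b) * (u * v)) lie in S_2(0), then Γ_{C*} = {ψ(c_1) + 2ψ(c_2) + 4z : (c_1, c_2) ∈ C, z ∈ Z^n} is an additive subgroup of Z^n (a lattice). -/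
/-- The natural embedding of `F_2^n` into `ℤ^n`. -/
def psiZ {n : ℕ} (c : Fin n → ZMod 2) : Fin n → ℤ := fun i => ((c i).val : ℤ)

/-- The 2-level Construction C* constellation in `ℤ^n` from a main code
`C ⊆ F_2^{2n}` (codewords split into two halves). -/
def gammaCStar2 {n : ℕ} (C : Set ((Fin n → ZMod 2) × (Fin n → ZMod 2))) :
    Set (Fin n → ℤ) :=
  {x | ∃ c ∈ C, ∃ z : Fin n → ℤ, x = psiZ c.1 + 2 • psiZ c.2 + 4 • z}

lemma valZ_add (a b : ZMod 2) :
    (((a + b).val : ℤ)) = ((a.val : ℤ)) + ((b.val : ℤ)) - 2 * (((a*b).val : ℤ)) := by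
  revert a b
  decide

/-- Sufficient lattice condition for 2-level Construction C*: with projection codes
`C₁, C₂` and antiprojection `S₂(0) = {c₂ : (0, c₂) ∈ C}`, if `C₁ ⊆ S₂(0)`, Schur
products of elements of `C₁` lie in `S₂(0)`, and the carries `a * b` and
`(a XOR b) * (u * v)` (for `a, b ∈ C₂`, `u, v ∈ C₁`) lie in `S₂(0)`, then `Γ_{C*}`
is an additive subgroup of `ℤ^n` (a lattice). -/
theorem constructionCStar_two_level_sufficient_lattice {n : ℕ}
    (C : Submodule (ZMod 2) ((Fin n → ZMod 2) × (Fin n → ZMod 2)))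
    (C₁ C₂ S₂ : Set (Fin n → ZMod 2))
    (hC₁ : C₁ = Prod.fst '' (C : Set ((Fin n → ZMod 2) × (Fin n → ZMod 2))))
    (hC₂ : C₂ = Prod.snd '' (C : Set ((Fin n → ZMod 2) × (Fin n → ZMod 2))))
    (hS₂ : S₂ = {c₂ | ((0 : Fin n → ZMod 2), c₂) ∈ C})
    (h1 : C₁ ⊆ S₂)
    (h2 : ∀ a ∈ C₁, ∀ b ∈ C₁, a * b ∈ S₂)
    (h3 : ∀ a ∈ C₂, ∀ b ∈ C₂, a * b ∈ S₂)
    (h4 : ∀ a ∈ C₂, ∀ b ∈ C₂, ∀ u ∈ C₁, ∀ v ∈ C₁, (a + b) * (u * v) ∈ S₂) :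
    ∃ G : AddSubgroup (Fin n → ℤ),
      (G : Set (Fin n → ℤ)) = gammaCStar2 (C : Set ((Fin n → ZMod 2) × (Fin n → ZMod 2))) := by
  subst hC₁ hC₂ hS₂
  refine ⟨{
    carrier := gammaCStar2 (C : Set ((Fin n → ZMod 2) × (Fin n → ZMod 2)))
    zero_mem' := ⟨0, C.zero_mem, 0, by
      funext i
      simp [psiZ]⟩
    add_mem' := ?_
    neg_mem' := ?_ }, rfl⟩
  · rintro x y ⟨c, hc, z, rfl⟩ ⟨d, hd, w, rfl⟩
    have hmem : (0, c.1 * d.1) ∈ C := h2 c.1 ⟨c, hc, rfl⟩ d.1 ⟨d, hd, rfl⟩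
    refine ⟨(c.1 + d.1, c.2 + d.2 + c.1 * d.1), ?_,
      psiZ ((c.2 + d.2) * (c.1 * d.1)) + psiZ (c.2 * d.2) + z + w, ?_⟩
    · have hpair : ((c.1 + d.1, c.2 + d.2 + c.1 * d.1) :
          (Fin n → ZMod 2) × (Fin n → ZMod 2)) = c + d + (0, c.1 * d.1) := by
        ext <;> simp
      rw [hpair]
      exact C.add_mem (C.add_mem hc hd) hmem
    · funext i
      simp only [psiZ, Pi.add_apply, Pi.smul_apply, Pi.mul_apply, smul_eq_mul]
      rw [valZ_add (c.1 i) (d.1 i), valZ_add (c.2 i + d.2 i) (c.1 i * d.1 i),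
        valZ_add (c.2 i) (d.2 i)]
      ring
  · rintro x ⟨c, hc, z, rfl⟩
    have hmem : (0, c.1) ∈ C := h1 ⟨c, hc, rfl⟩
    refine ⟨(c.1, c.2 + c.1), ?_,
      psiZ (c.2 * c.1) - psiZ c.1 - psiZ c.2 - z, ?_⟩
    · have hpair : ((c.1, c.2 + c.1) :
          (Fin n → ZMod 2) × (Fin n → ZMod 2)) = c + (0, c.1) := by
        ext <;> simp
      rw [hpair]
      exact C.add_mem hc hmem
    · funext i
      simp only [psiZ, Pi.add_apply, Pi.smul_apply, Pi.sub_apply, Pi.neg_apply,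
        Pi.mul_apply, smul_eq_mul]
      rw [valZ_add (c.2 i) (c.1 i)]
      ring
end

section
/- (Necessary and sufficient lattice condition for 2-level Construction C*.) Let C ⊆ F_2^{2n} be a linear binary code, and let S = {(0, s_1(c, c̃)) : c, c̃ ∈ C} ⊆ F_2^{2n} where, for c = (c_1, c_2) and c̃ = (c̃_1, c̃_2), s_1(c, c̃) = c_1 * c̃_1. Then Γ_{C*} = {ψ(c_1) + 2ψ(c_2) + 4z : (c_1, c_2) ∈ C, z ∈ Z^n} is an additive subgroup of Z^n if and only if S ⊆ C. -/
lemma add_key : ∀ a b c d : ZMod 2,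
    (((a.val:ℤ) + 2*b.val) + (c.val + 2*d.val))
      = ((a+c).val:ℤ) + 2*((b+d+a*c).val:ℤ)
        + 4*(((a*c*b).val:ℤ) + (((a*c+b)*d).val:ℤ)) := by decide

lemma neg_key : ∀ a b : ZMod 2,
    -((a.val:ℤ) + 2*b.val) = (a.val:ℤ) + 2*((a+b).val:ℤ) - 4*((a+b+a*b).val:ℤ) := by decide

lemma master_add {n : ℕ} (c₁ c₂ d₁ d₂ : Fin n → ZMod 2) (z w : Fin n → ℤ) :
    (psiZ c₁ + 2 • psiZ c₂ + 4 • z) + (psiZ d₁ + 2 • psiZ d₂ + 4 • w)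
      = psiZ (c₁+d₁) + 2 • psiZ (c₂+d₂+c₁*d₁)
        + 4 • (z + w + psiZ (c₁*d₁*c₂) + psiZ ((c₁*d₁+c₂)*d₂)) := by
  funext i
  have h := add_key (c₁ i) (c₂ i) (d₁ i) (d₂ i)
  simp only [psiZ, Pi.add_apply, Pi.smul_apply, Pi.mul_apply]
  simp only [nsmul_eq_mul, Nat.cast_ofNat]
  linarith

lemma master_neg {n : ℕ} (c₁ c₂ : Fin n → ZMod 2) (z : Fin n → ℤ) :
    -(psiZ c₁ + 2 • psiZ c₂ + 4 • z)
      = psiZ c₁ + 2 • psiZ (c₁+c₂) + 4 • (-z - psiZ (c₁+c₂+c₁*c₂)) := by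
  funext i
  have h := neg_key (c₁ i) (c₂ i)
  simp only [psiZ, Pi.add_apply, Pi.smul_apply, Pi.mul_apply, Pi.neg_apply, Pi.sub_apply,
    ]
  simp only [nsmul_eq_mul, Nat.cast_ofNat]
  linarith

lemma psi_uniq {n : ℕ} {a a' b b' : Fin n → ZMod 2} {z z' : Fin n → ℤ}
    (h : psiZ a + 2 • psiZ b + 4 • z = psiZ a' + 2 • psiZ b' + 4 • z') :
    a = a' ∧ b = b' := by
  have key : ∀ i, a i = a' i ∧ b i = b' i := by
    intro i
    have hi := congrFun h i
    simp only [psiZ, Pi.add_apply, Pi.smul_apply] at hi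
    simp only [nsmul_eq_mul, Nat.cast_ofNat] at hi
    have h1 := (a i).val_lt
    have h2 := (a' i).val_lt
    have h3 := (b i).val_lt
    have h4 := (b' i).val_lt
    have ha : (a i).val = (a' i).val := by omega
    have hb : (b i).val = (b' i).val := by omega
    exact ⟨ZMod.val_injective 2 ha, ZMod.val_injective 2 hb⟩
  exact ⟨funext fun i => (key i).1, funext fun i => (key i).2⟩

/-- Necessary and sufficient lattice condition for 2-level Construction C*: for a
linear main code `C ⊆ F_2^{2n}`, the constellation `Γ_{C*}` is an additive subgroup
of `ℤ^n` if and only if `S = {(0, c₁ * d₁) : (c₁,c₂), (d₁,d₂) ∈ C} ⊆ C`, where `*`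
is the Schur product. -/
theorem constructionCStar_two_level_lattice_iff {n : ℕ}
    (C : Submodule (ZMod 2) ((Fin n → ZMod 2) × (Fin n → ZMod 2))) :
    (∃ G : AddSubgroup (Fin n → ℤ),
        (G : Set (Fin n → ℤ)) = gammaCStar2 (C : Set ((Fin n → ZMod 2) × (Fin n → ZMod 2))))
      ↔ (∀ c ∈ C, ∀ d ∈ C,
          (((0 : Fin n → ZMod 2), c.1 * d.1) : (Fin n → ZMod 2) × (Fin n → ZMod 2)) ∈ C) := by
  constructor
  · rintro ⟨G, hG⟩ c hc d hd
    have hx : psiZ c.1 + 2 • psiZ c.2 + 4 • (0 : Fin n → ℤ) ∈ G := by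
      rw [← SetLike.mem_coe, hG]
      exact ⟨c, hc, 0, rfl⟩
    have hy : psiZ d.1 + 2 • psiZ d.2 + 4 • (0 : Fin n → ℤ) ∈ G := by
      rw [← SetLike.mem_coe, hG]
      exact ⟨d, hd, 0, rfl⟩
    have hsum := G.add_mem hx hy
    rw [← SetLike.mem_coe, hG] at hsum
    obtain ⟨e, he, z, hz⟩ := hsum
    rw [master_add] at hz
    obtain ⟨h1, h2⟩ := psi_uniq hz
    have hmem : e + c + d ∈ C := C.add_mem (C.add_mem he hc) hd
    have heq : (((0 : Fin n → ZMod 2), c.1 * d.1) :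
        (Fin n → ZMod 2) × (Fin n → ZMod 2)) = e + c + d := by
      have k1 : ∀ x y : ZMod 2, (0 : ZMod 2) = (x + y) + x + y := by decide
      have k2 : ∀ x y u : ZMod 2, u = (x + y + u) + x + y := by decide
      ext i
      · show (0 : ZMod 2) = e.1 i + c.1 i + d.1 i
        rw [← congrFun h1 i, Pi.add_apply]
        exact k1 (c.1 i) (d.1 i)
      · show c.1 i * d.1 i = e.2 i + c.2 i + d.2 i
        rw [← congrFun h2 i]
        simp only [Pi.add_apply, Pi.mul_apply]
        exact k2 (c.2 i) (d.2 i) (c.1 i * d.1 i)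
    rw [heq]; exact hmem
  · intro hS
    refine ⟨{
      carrier := gammaCStar2 (C : Set ((Fin n → ZMod 2) × (Fin n → ZMod 2)))
      zero_mem' := ⟨0, C.zero_mem, 0, by
        funext i
        simp [psiZ]⟩
      add_mem' := by
        rintro x y ⟨c, hc, z, rfl⟩ ⟨d, hd, w, rfl⟩
        refine ⟨c + d + ((0 : Fin n → ZMod 2), c.1 * d.1), ?_,
          z + w + psiZ (c.1*d.1*c.2) + psiZ ((c.1*d.1+c.2)*d.2), ?_⟩
        · exact C.add_mem (C.add_mem hc hd) (hS c hc d hd)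
        · have e1 : (c + d + (((0 : Fin n → ZMod 2), c.1 * d.1) :
              (Fin n → ZMod 2) × (Fin n → ZMod 2))).1 = c.1 + d.1 := by
            simp [Prod.fst_add]
          have e2 : (c + d + (((0 : Fin n → ZMod 2), c.1 * d.1) :
              (Fin n → ZMod 2) × (Fin n → ZMod 2))).2 = c.2 + d.2 + c.1 * d.1 := rfl
          rw [e1, e2, master_add]
      neg_mem' := by
        rintro x ⟨c, hc, z, rfl⟩
        refine ⟨c + ((0 : Fin n → ZMod 2), c.1), ?_,
          -z - psiZ (c.1+c.2+c.1*c.2), ?_⟩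
        · have : (((0 : Fin n → ZMod 2), c.1) :
              (Fin n → ZMod 2) × (Fin n → ZMod 2)) = (0, c.1 * c.1) := by
            have k : ∀ x : ZMod 2, x = x * x := by decide
            ext i
            · rfl
            · exact k (c.1 i)
          exact C.add_mem hc (this ▸ hS c hc c hc)
        · have e1 : (c + (((0 : Fin n → ZMod 2), c.1) :
              (Fin n → ZMod 2) × (Fin n → ZMod 2))).1 = c.1 := by
            simp [Prod.fst_add]
          have e2 : (c + (((0 : Fin n → ZMod 2), c.1) :
              (Fin n → ZMod 2) × (Fin n → ZMod 2))).2 = c.1 + c.2 := by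
            show c.2 + c.1 = c.1 + c.2
            exact add_comm _ _
          rw [e1, e2, master_neg]
    }, rfl⟩
end

section
/- If x is an element of a 2-level Construction C* constellation Γ_{C*} built from a linear binary main code C ⊆ F_2^{2n}, and Γ_{C*} is closed under addition, then −x ∈ Γ_{C*}; consequently a sum-closed Γ_{C*} is an additive subgroup of Z^n. -/
/-- If the 2-level Construction C* constellation built from a linear main code
`C ⊆ F_2^{2n}` is closed under addition, then it contains the negative of each of
its elements; consequently it is an additive subgroup of `ℤ^n`. -/
theorem constructionCStar_neg_mem_of_add_closed {n : ℕ}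
    (C : Submodule (ZMod 2) ((Fin n → ZMod 2) × (Fin n → ZMod 2)))
    (hadd : ∀ x ∈ gammaCStar2 (C : Set ((Fin n → ZMod 2) × (Fin n → ZMod 2))),
            ∀ y ∈ gammaCStar2 (C : Set ((Fin n → ZMod 2) × (Fin n → ZMod 2))),
              x + y ∈ gammaCStar2 (C : Set ((Fin n → ZMod 2) × (Fin n → ZMod 2)))) :
    (∀ x ∈ gammaCStar2 (C : Set ((Fin n → ZMod 2) × (Fin n → ZMod 2))),
        -x ∈ gammaCStar2 (C : Set ((Fin n → ZMod 2) × (Fin n → ZMod 2)))) ∧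
    ∃ G : AddSubgroup (Fin n → ℤ),
      (G : Set (Fin n → ℤ)) = gammaCStar2 (C : Set ((Fin n → ZMod 2) × (Fin n → ZMod 2))) := by
  have hneg : ∀ x ∈ gammaCStar2 (C : Set ((Fin n → ZMod 2) × (Fin n → ZMod 2))),
      -x ∈ gammaCStar2 (C : Set ((Fin n → ZMod 2) × (Fin n → ZMod 2))) := by
    intro x hx
    have h3 : x + x + x ∈ gammaCStar2 (C : Set ((Fin n → ZMod 2) × (Fin n → ZMod 2))) :=
      hadd _ (hadd x hx x hx) x hx
    obtain ⟨c, hc, w, hw⟩ := h3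
    refine ⟨c, hc, w - x, ?_⟩
    funext i
    have h := congrFun hw i
    simp only [Pi.add_apply, Pi.smul_apply, Pi.sub_apply, Pi.neg_apply, smul_eq_mul, nsmul_eq_mul, Pi.mul_apply, Pi.natCast_apply, Nat.cast_ofNat, Pi.ofNat_apply] at h ⊢
    omega
  refine ⟨hneg, ⟨{
    carrier := gammaCStar2 (C : Set ((Fin n → ZMod 2) × (Fin n → ZMod 2)))
    zero_mem' := ⟨0, C.zero_mem, 0, by funext i; simp [psiZ]⟩
    add_mem' := fun {a b} ha hb => hadd a ha b hb
    neg_mem' := fun {a} ha => hneg a ha }, rfl⟩⟩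
end
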